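/- Let t ≥ 2 and k ≥ 1 be integers. The real number H_k(1/2)/H_k(1/2^{t^k}) is irrational. -/

import Mathlib

/-!
Write `T = t^k`, `w_m = (1/2)^(T^m)` and `g_m = H_k(w_m)`. The recursions for `α_n` and for the
Stern polynomials give the Mahler-type functional equation
`H_k(z) = B(z) H_k(z^T) + z^(T S) H_k(z^(T²))`, where `S = 1 + t + ⋯ + t^(k-1)` and `B ∈ ℤ[z]` has
degree `β < S`; hence `g_m = B(w_m) g_{m+1} + 2^(-T S T^m) g_{m+2}` with `1 ≤ g_m ≤ g_0`.
If `g_0 / g_1` were rational, every ratio `g_m / g_{m+1}` would be rational with a denominator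
`q_m ≤ C g_0^m 2^(β T^m)`, while the positive integer `q_m 2^(β T^m) (g_m / g_{m+1} - B(w_m))`
forces `q_{m+1} ≥ 2^(T S T^m)`. Since `T S > 2 β`, this gives `2^(2^m) ≤ C' g_0^m` for all `m`,
which is absurd.
-/

open Polynomial

/-- The (Type 1) Stern polynomials `a_t(n; z) ∈ ℤ[z]` of Dilcher and Eriksen:
`a_t(0;z) = 0`, `a_t(1;z) = 1`, and for `n ≥ 1`,
`a_t(2n;z) = z·a_t(n;z^t)`, `a_t(2n+1;z) = a_t(n+1;z^t) + a_t(n;z^t)`. -/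
noncomputable def sternPoly (t : ℕ) : ℕ → Polynomial ℤ
  | 0 => 0
  | 1 => 1
  | n + 2 =>
    if h : (n + 2) % 2 = 0 then
      X * (sternPoly t ((n + 2) / 2)).comp (X ^ t)
    else
      (sternPoly t ((n + 2) / 2 + 1)).comp (X ^ t) +
        (sternPoly t ((n + 2) / 2)).comp (X ^ t)
decreasing_by all_goals omega

/-- `α_n = (2^{kn} - (-1)^n) / (2^k + 1)`, a nonnegative integer. -/
def sternAlpha (k n : ℕ) : ℕ :=
  (((2 : ℤ) ^ (k * n) - (-1) ^ n) / (2 ^ k + 1)).toNat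

open Finset Filter Topology

lemma sternPoly_two_mul (t n : ℕ) : sternPoly t (2 * n) = X * (sternPoly t n).comp (X ^ t) := by
  rcases n with _ | n
  · simp [sternPoly]
  · rw [show 2 * (n + 1) = 2 * n + 2 by ring, sternPoly, dif_pos (by omega),
      show (2 * n + 2) / 2 = n + 1 by omega]

lemma sternPoly_two_mul_add_one (t n : ℕ) :
    sternPoly t (2 * n + 1) =
      (sternPoly t (n + 1)).comp (X ^ t) + (sternPoly t n).comp (X ^ t) := by
  rcases n with _ | n
  · simp [sternPoly]
  · rw [show 2 * (n + 1) + 1 = 2 * n + 1 + 2 by ring, sternPoly, dif_neg (by omega),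
      show (2 * n + 1 + 2) / 2 = n + 1 by omega]

theorem Nat.two_mul_induction {P : ℕ → Prop} (zero : P 0) (one : P 1)
    (two_mul : ∀ n, P n → P (2 * n)) (two_mul_add_one : ∀ n, P n → P (n + 1) → P (2 * n + 1))
    (n : ℕ) : P n := by
  induction n using Nat.strong_induction_on with
  | _ n ih =>
    obtain ⟨m, rfl | rfl⟩ := Nat.even_or_odd' n
    · rcases m with _ | m
      · exact zero
      · exact two_mul _ (ih _ (by omega))
    · rcases m with _ | m
      · exact one
      · exact two_mul_add_one _ (ih _ (by omega)) (ih _ (by omega))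

lemma eval_zero_sternPoly {t : ℕ} (ht : t ≠ 0) (n : ℕ) :
    (sternPoly t n).eval 0 = (n % 2 : ℕ) := by
  induction n using Nat.two_mul_induction with
  | zero => simp [sternPoly]
  | one => simp [sternPoly]
  | two_mul n _ => simp [sternPoly_two_mul]
  | two_mul_add_one n ih ih' =>
    simp only [sternPoly_two_mul_add_one, eval_add, eval_comp, eval_pow, eval_X, zero_pow ht,
      ih, ih']
    omega

lemma aeval_sternPoly_nonneg (t n : ℕ) {x : ℝ} (hx : 0 ≤ x) : 0 ≤ aeval x (sternPoly t n) := by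
  induction n using Nat.two_mul_induction generalizing x with
  | zero => simp [sternPoly]
  | one => simp [sternPoly]
  | two_mul n ih =>
    rw [sternPoly_two_mul, map_mul, aeval_X, aeval_comp, aeval_X_pow]
    exact mul_nonneg hx (ih (by positivity))
  | two_mul_add_one n ih ih' =>
    rw [sternPoly_two_mul_add_one, map_add, aeval_comp, aeval_comp, aeval_X_pow]
    exact add_nonneg (ih' (by positivity)) (ih (by positivity))

lemma aeval_sternPoly_mono (t n : ℕ) {x y : ℝ} (hx : 0 ≤ x) (hxy : x ≤ y) :
    aeval x (sternPoly t n) ≤ aeval y (sternPoly t n) := by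
  induction n using Nat.two_mul_induction generalizing x y with
  | zero => simp [sternPoly]
  | one => simp [sternPoly]
  | two_mul n ih =>
    simp only [sternPoly_two_mul, map_mul, aeval_X, aeval_comp, aeval_X_pow]
    exact mul_le_mul hxy (ih (by positivity) (by gcongr)) (aeval_sternPoly_nonneg t n
      (by positivity)) (hx.trans hxy)
  | two_mul_add_one n ih ih' =>
    simp only [sternPoly_two_mul_add_one, map_add, aeval_comp, aeval_X_pow]
    exact add_le_add (ih' (by positivity) (by gcongr)) (ih (by positivity) (by gcongr))

noncomputable def sternB (t : ℕ) : ℕ → ℤ[X]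
  | 0 => 0
  | j + 1 => (sternB t j).comp (X ^ t) + X ^ (t * ∑ i ∈ range j, t ^ i)

lemma sternPoly_two_pow_mul (t j m : ℕ) :
    sternPoly t (2 ^ j * m) =
      X ^ (∑ i ∈ range j, t ^ i) * (sternPoly t m).comp (X ^ t ^ j) := by
  induction j with
  | zero => simp
  | succ j ih =>
    rw [pow_succ', mul_assoc, sternPoly_two_mul, ih, geom_sum_succ]
    simp only [mul_comp, X_pow_comp, comp_assoc, ← pow_mul, ← pow_succ']
    ring

lemma sternPoly_two_pow_mul_add_one (t j m : ℕ) :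
    sternPoly t (2 ^ j * m + 1) =
      (sternPoly t (m + 1)).comp (X ^ t ^ j) + sternB t j * (sternPoly t m).comp (X ^ t ^ j) := by
  induction j with
  | zero => simp [sternB]
  | succ j ih =>
    rw [pow_succ', mul_assoc, sternPoly_two_mul_add_one, ih, sternPoly_two_pow_mul]
    simp only [sternB, add_comp, mul_comp, X_pow_comp, comp_assoc, ← pow_mul, ← pow_succ']
    ring

lemma sternPoly_two_pow_mul_sub_one (t j m : ℕ) :
    sternPoly t (2 ^ j * (m + 1) - 1) =
      (sternPoly t m).comp (X ^ t ^ j) + sternB t j * (sternPoly t (m + 1)).comp (X ^ t ^ j) := by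
  induction j with
  | zero => simp [sternB]
  | succ j ih =>
    have hpos : 0 < 2 ^ j * (m + 1) := by positivity
    have hidx : 2 ^ (j + 1) * (m + 1) - 1 = 2 * (2 ^ j * (m + 1) - 1) + 1 := by
      rw [pow_succ', mul_assoc]; omega
    rw [hidx, sternPoly_two_mul_add_one, Nat.sub_add_cancel hpos, ih, sternPoly_two_pow_mul]
    simp only [sternB, add_comp, mul_comp, X_pow_comp, comp_assoc, ← pow_mul, ← pow_succ']
    ring

lemma natDegree_sternB_lt (t : ℕ) {j : ℕ} (hj : j ≠ 0) :
    (sternB t j).natDegree < ∑ i ∈ range j, t ^ i := by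
  obtain ⟨j, rfl⟩ := Nat.exists_eq_succ_of_ne_zero hj
  induction j with
  | zero => simp [sternB]
  | succ j ih =>
    rw [geom_sum_succ, Nat.lt_add_one_iff, sternB]
    refine (natDegree_add_le _ _).trans (max_le ?_ (natDegree_X_pow_le _))
    refine natDegree_comp_le.trans ?_
    rw [natDegree_X_pow, mul_comm]
    exact Nat.mul_le_mul_left t (ih j.succ_ne_zero).le

lemma two_pow_add_one_mul_sternAlpha (k n : ℕ) :
    ((2 : ℤ) ^ k + 1) * sternAlpha k n = 2 ^ (k * n) - (-1) ^ n := by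
  have hdvd : (2 : ℤ) ^ k + 1 ∣ 2 ^ (k * n) - (-1) ^ n := by
    simpa [pow_mul] using sub_dvd_pow_sub_pow ((2 : ℤ) ^ k) (-1) n
  have hnonneg : (0 : ℤ) ≤ 2 ^ (k * n) - (-1) ^ n := by
    have := one_le_pow₀ (M₀ := ℤ) (a := 2) (n := k * n) (by norm_num)
    rcases neg_one_pow_eq_or ℤ n with h | h <;> rw [h] <;> linarith
  rw [sternAlpha, Int.toNat_of_nonneg (Int.ediv_nonneg hnonneg (by positivity)),
    Int.mul_ediv_cancel' hdvd]

lemma sternAlpha_succ (k n : ℕ) :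
    (sternAlpha k (n + 1) : ℤ) = 2 ^ k * sternAlpha k n + (-1) ^ n := by
  refine mul_left_cancel₀ (by positivity : (2 : ℤ) ^ k + 1 ≠ 0) ?_
  linear_combination two_pow_add_one_mul_sternAlpha k (n + 1) -
    2 ^ k * two_pow_add_one_mul_sternAlpha k n

lemma sternAlpha_succ_of_even (k : ℕ) {n : ℕ} (hn : Even n) :
    sternAlpha k (n + 1) = 2 ^ k * sternAlpha k n + 1 := by
  have h := sternAlpha_succ k n
  rw [hn.neg_one_pow] at h
  exact_mod_cast h

lemma sternAlpha_succ_add_one_of_odd (k : ℕ) {n : ℕ} (hn : Odd n) :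
    sternAlpha k (n + 1) + 1 = 2 ^ k * sternAlpha k n := by
  have h := sternAlpha_succ k n
  rw [hn.neg_one_pow] at h
  exact_mod_cast (by linarith : (sternAlpha k (n + 1) : ℤ) + 1 = 2 ^ k * sternAlpha k n)

lemma odd_sternAlpha_succ {k : ℕ} (hk : k ≠ 0) (n : ℕ) : Odd (sternAlpha k (n + 1)) := by
  rw [← Int.odd_coe_nat, sternAlpha_succ]
  exact ((Int.even_pow.2 ⟨even_two, hk⟩).mul_right _).add_odd (odd_neg_one.pow)

lemma sternPoly_sternAlpha_add_two (t k n : ℕ) :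
    sternPoly t (sternAlpha k (n + 2)) =
      sternB t k * (sternPoly t (sternAlpha k (n + 1))).comp (X ^ t ^ k) +
        X ^ (t ^ k * ∑ i ∈ range k, t ^ i) *
          (sternPoly t (sternAlpha k n)).comp (X ^ (t ^ k * t ^ k)) := by
  have hcomp : (sternPoly t (2 ^ k * sternAlpha k n)).comp (X ^ t ^ k) =
      X ^ (t ^ k * ∑ i ∈ range k, t ^ i) *
        (sternPoly t (sternAlpha k n)).comp (X ^ (t ^ k * t ^ k)) := by
    rw [sternPoly_two_pow_mul, mul_comp, X_pow_comp, comp_assoc, X_pow_comp, ← pow_mul,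
      ← pow_mul, mul_comm]
  rcases Nat.even_or_odd n with hn | hn
  · have hb := sternAlpha_succ_of_even k hn
    have hc : sternAlpha k (n + 2) = 2 ^ k * (2 ^ k * sternAlpha k n + 1) - 1 := by
      rw [← hb]
      exact Nat.eq_sub_of_add_eq (sternAlpha_succ_add_one_of_odd k hn.add_one)
    rw [hc, sternPoly_two_pow_mul_sub_one, hcomp, ← hb]
    ring
  · rw [sternAlpha_succ_of_even k hn.add_one, sternPoly_two_pow_mul_add_one,
      sternAlpha_succ_add_one_of_odd k hn, hcomp]
    ring

def HasSternLimit (t k : ℕ) (H : ℝ → ℝ) : Prop :=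
  ∀ x : ℝ, |x| < 1 → Tendsto (fun n => aeval x (sternPoly t (sternAlpha k n))) atTop (𝓝 (H x))

namespace HasSternLimit

variable {t k : ℕ} {H : ℝ → ℝ}

lemma one_le (hH : HasSternLimit t k H) (ht : t ≠ 0) (hk : k ≠ 0) {x : ℝ} (hx₀ : 0 ≤ x)
    (hx₁ : x < 1) : 1 ≤ H x := by
  refine ge_of_tendsto ((tendsto_add_atTop_iff_nat 1).2 (hH x (by rwa [abs_of_nonneg hx₀])))
    (Eventually.of_forall fun n => ?_)
  have hzero : aeval (0 : ℝ) (sternPoly t (sternAlpha k (n + 1))) = 1 := by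
    rw [← coeff_zero_eq_aeval_zero', coeff_zero_eq_eval_zero, eval_zero_sternPoly ht,
      Nat.odd_iff.1 (odd_sternAlpha_succ hk n)]
    simp
  calc 1 = aeval (0 : ℝ) (sternPoly t (sternAlpha k (n + 1))) := hzero.symm
    _ ≤ _ := aeval_sternPoly_mono t _ le_rfl hx₀

lemma mono (hH : HasSternLimit t k H) {x y : ℝ} (hx : 0 ≤ x) (hxy : x ≤ y) (hy : y < 1) :
    H x ≤ H y :=
  le_of_tendsto_of_tendsto' (hH x (by rw [abs_of_nonneg hx]; linarith))
    (hH y (by rw [abs_of_nonneg (hx.trans hxy)]; exact hy))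
    fun _ => aeval_sternPoly_mono t _ hx hxy

lemma functional_eq (hH : HasSternLimit t k H) (ht : t ≠ 0) {x : ℝ} (hx : |x| < 1) :
    H x = aeval x (sternB t k) * H (x ^ t ^ k) +
      x ^ (t ^ k * ∑ i ∈ range k, t ^ i) * H (x ^ (t ^ k * t ^ k)) := by
  have hpow {n : ℕ} (hn : n ≠ 0) : |x ^ n| < 1 := by
    rw [abs_pow]; exact pow_lt_one₀ (abs_nonneg x) hx hn
  have h₁ := (tendsto_add_atTop_iff_nat 1).2 (hH _ (hpow (pow_ne_zero k ht)))
  have h₂ := hH _ (hpow (n := t ^ k * t ^ k) (by positivity))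
  refine tendsto_nhds_unique ((tendsto_add_atTop_iff_nat 2).2 (hH x hx)) ?_
  refine ((h₁.const_mul _).add (h₂.const_mul _)).congr fun n => ?_
  rw [sternPoly_sternAlpha_add_two]
  simp only [map_add, map_mul, aeval_comp, aeval_X_pow]

end HasSternLimit

lemma Nat.mul_add_three_lt_two_pow (c : ℕ) : c * (2 * c + 3) < 2 ^ (2 * c + 2) := by
  have h : c < 2 ^ c := Nat.lt_two_pow_self
  have h2 : 2 ^ (2 * c + 2) = 4 * (2 ^ c * 2 ^ c) := by ring
  nlinarith

lemma not_forall_two_pow_two_pow_le (C M : ℝ) : ¬ ∀ m : ℕ, (2 : ℝ) ^ 2 ^ m ≤ C * M ^ m := by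
  intro h
  obtain ⟨c, hc⟩ := pow_unbounded_of_one_lt (max |C| |M|) one_lt_two
  have hbound : C * M ^ (2 * c + 2) ≤ 2 ^ (c * (2 * c + 3)) :=
    calc C * M ^ (2 * c + 2) ≤ |C| * |M| ^ (2 * c + 2) := by
          rw [← abs_pow, ← abs_mul]; exact le_abs_self _
      _ ≤ 2 ^ c * (2 ^ c) ^ (2 * c + 2) := by
          gcongr
          · exact (le_max_left _ _).trans hc.le
          · exact (le_max_right _ _).trans hc.le
      _ = 2 ^ (c * (2 * c + 3)) := by ring
  have := (h _).trans hbound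
  rw [pow_le_pow_iff_right₀ one_lt_two] at this
  exact (Nat.mul_add_three_lt_two_pow c).not_ge this

lemma exists_int_mul_div_of_recursion {u v w c M : ℝ} {A C : ℕ} (hv : 1 ≤ v) (hw : 0 < w)
    (hwM : w ≤ M) (hc : ∃ z : ℤ, (z : ℝ) = 2 ^ A * c) (hrec : u = c * v + (1 / 2) ^ C * w)
    {q : ℤ} (hq : 0 < q) (hqr : ∃ z : ℤ, (z : ℝ) = q * (u / v)) :
    ∃ q' : ℤ, 0 < q' ∧ (∃ z : ℤ, (z : ℝ) = q' * (v / w)) ∧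
      2 ^ C ≤ (q' : ℝ) ∧ (q' : ℝ) ≤ q * 2 ^ A * M := by
  obtain ⟨z, hz⟩ := hqr
  obtain ⟨zc, hzc⟩ := hc
  have hv0 : 0 < v := one_pos.trans_le hv
  -- `N` is the integer `q 2^A (u/v - c)`; it is positive, hence at least `1`.
  set N : ℤ := 2 ^ A * z - q * zc
  have hN : (N : ℝ) = q * 2 ^ A * (1 / 2) ^ C * (w / v) := by
    push_cast [N]
    rw [hz, hzc, hrec]
    field_simp
    ring
  have hNpos : 0 < N := by
    have : (0 : ℝ) < N := by rw [hN]; positivity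
    exact_mod_cast this
  have hq' : ((2 ^ C * N : ℤ) : ℝ) = q * 2 ^ A * (w / v) := by
    push_cast
    rw [hN, one_div, inv_pow]
    field_simp
  refine ⟨2 ^ C * N, by positivity, ⟨q * 2 ^ A, ?_⟩, ?_, ?_⟩
  · rw [hq']
    push_cast
    field_simp
  · push_cast
    exact le_mul_of_one_le_right (by positivity) (by exact_mod_cast hNpos)
  · rw [hq']
    gcongr
    exact (div_le_self hw.le hv).trans hwM

theorem irrational_div_of_lacunary_recursion {T β γ : ℕ} {g b : ℕ → ℝ} {M : ℝ} (hT : 2 ≤ T)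
    (hβγ : 2 * β < γ) (hg : ∀ m, 1 ≤ g m) (hgM : ∀ m, g m ≤ M)
    (hb : ∀ m, ∃ z : ℤ, (z : ℝ) = 2 ^ (β * T ^ m) * b m)
    (hrec : ∀ m, g m = b m * g (m + 1) + (1 / 2) ^ (γ * T ^ m) * g (m + 2)) :
    Irrational (g 0 / g 1) := by
  rintro ⟨ρ, hρ⟩
  have hM : 1 ≤ M := (hg 0).trans (hgM 0)
  have step {m : ℕ} {q : ℤ} := exists_int_mul_div_of_recursion (q := q) (hg (m + 1))
    (one_pos.trans_le (hg (m + 2))) (hgM (m + 2)) (hb m) (hrec m)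
  have hdenom : ∀ m, ∃ q : ℤ, 0 < q ∧ (∃ z : ℤ, (z : ℝ) = q * (g m / g (m + 1))) ∧
      (q : ℝ) ≤ ρ.den * M ^ m * 2 ^ (β * T ^ m) := by
    intro m
    induction m with
    | zero =>
      refine ⟨ρ.den, by positivity, ⟨ρ.num, ?_⟩, ?_⟩
      · rw [← hρ, Rat.cast_def, Int.cast_natCast]
        field_simp
      · rw [Int.cast_natCast, pow_zero, mul_one]
        exact le_mul_of_one_le_right (by positivity) (one_le_pow₀ one_le_two)
    | succ m ih =>
      obtain ⟨q, hq, hqr, hqle⟩ := ih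
      obtain ⟨q', hq', hq'r, -, hq'le⟩ := step hq hqr
      refine ⟨q', hq', hq'r, hq'le.trans ?_⟩
      have hT' : 2 * T ^ m ≤ T ^ (m + 1) := by rw [pow_succ']; gcongr
      calc (q : ℝ) * 2 ^ (β * T ^ m) * M
          ≤ ρ.den * M ^ m * 2 ^ (β * T ^ m) * 2 ^ (β * T ^ m) * M := by gcongr
        _ = ρ.den * M ^ (m + 1) * 2 ^ (β * (2 * T ^ m)) := by ring
        _ ≤ ρ.den * M ^ (m + 1) * 2 ^ (β * T ^ (m + 1)) := by gcongr; exact one_le_two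
  refine not_forall_two_pow_two_pow_le (ρ.den * M) M fun m => ?_
  obtain ⟨q, hq, hqr, hqle⟩ := hdenom m
  obtain ⟨q', -, -, hlow, hup⟩ := step hq hqr
  obtain ⟨d, rfl⟩ := Nat.exists_eq_add_of_lt hβγ
  have hsq : (0 : ℝ) < 2 ^ (β * T ^ m) * 2 ^ (β * T ^ m) := by positivity
  calc (2 : ℝ) ^ 2 ^ m ≤ 2 ^ ((d + 1) * T ^ m) := by
        gcongr
        · exact one_le_two
        · exact (Nat.pow_le_pow_left hT m).trans (Nat.le_mul_of_pos_left _ d.succ_pos)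
    _ ≤ ρ.den * M * M ^ m := by
        refine le_of_mul_le_mul_right ?_ hsq
        calc (2 : ℝ) ^ ((d + 1) * T ^ m) * (2 ^ (β * T ^ m) * 2 ^ (β * T ^ m))
            = 2 ^ ((2 * β + d + 1) * T ^ m) := by ring
          _ ≤ q * 2 ^ (β * T ^ m) * M := hlow.trans hup
          _ ≤ ρ.den * M ^ m * 2 ^ (β * T ^ m) * 2 ^ (β * T ^ m) * M := by gcongr
          _ = ρ.den * M * M ^ m * (2 ^ (β * T ^ m) * 2 ^ (β * T ^ m)) := by ring
lemma exists_int_eq_two_pow_mul_aeval_half_pow (p : ℤ[X]) (s : ℕ) :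
    ∃ z : ℤ, (z : ℝ) = 2 ^ (p.natDegree * s) * aeval ((1 / 2 : ℝ) ^ s) p := by
  let : Invertible ((1 / 2 : ℝ) ^ s) := invertibleOfNonzero (by positivity)
  refine ⟨(reflect p.natDegree p).eval (2 ^ s), ?_⟩
  have hcast := eval₂_hom (Int.castRingHom ℝ) (2 ^ s) (p := reflect p.natDegree p)
  simp only [eq_intCast, Int.cast_pow, Int.cast_ofNat] at hcast
  rw [aeval_def, ← eval₂_reflect_mul_pow _ _ _ _ le_rfl, invOf_eq_inv, algebraMap_int_eq,
    one_div, inv_pow, inv_inv, ← hcast, inv_pow, ← pow_mul, mul_comm s]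
  field_simp

/-- The real number `H_k(1/2) / H_k(1/2^{t^k})` is irrational, where `H_k(x)` is the
limit of `a_t(α_n; x)` as `n → ∞` for `|x| < 1`. -/
theorem Hk_half_quotient_irrational (t k : ℕ) (ht : 2 ≤ t) (hk : 1 ≤ k) (H : ℝ → ℝ)
    (hH : ∀ x : ℝ, |x| < 1 →
      Filter.Tendsto (fun n => Polynomial.aeval x (sternPoly t (sternAlpha k n)))
        Filter.atTop (nhds (H x)))  :
    Irrational (H (1 / 2) / H ((1 / 2) ^ t ^ k)) := by
  replace hH : HasSternLimit t k H := hH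
  set T := t ^ k
  set S := ∑ i ∈ range k, t ^ i
  have hT : 2 ≤ T := ht.trans (Nat.le_self_pow (by omega) t)
  set w : ℕ → ℝ := fun m => (1 / 2) ^ T ^ m
  have hw : ∀ m, 0 ≤ w m ∧ w m ≤ 1 / 2 := fun m =>
    ⟨by positivity, pow_le_of_le_one (by norm_num) (by norm_num) (by positivity)⟩
  have hw₁ : ∀ m, w m < 1 := fun m => (hw m).2.trans_lt (by norm_num)
  have hpow₁ : ∀ m, w m ^ T = w (m + 1) := by simp [w, ← pow_mul, pow_succ]
  have hpow₂ : ∀ m, w m ^ (T * T) = w (m + 2) := by simp [w, ← pow_mul, pow_succ, mul_assoc]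
  have hβγ : 2 * (sternB t k).natDegree < T * S :=
    calc 2 * (sternB t k).natDegree < 2 * S := by
          have := natDegree_sternB_lt t (j := k) (by omega); omega
      _ ≤ T * S := Nat.mul_le_mul_right S hT
  have key := irrational_div_of_lacunary_recursion (g := fun m => H (w m)) hT hβγ
    (fun m => hH.one_le (by omega) (by omega) (hw m).1 (hw₁ m))
    (fun m => hH.mono (hw m).1 ((hw m).2.trans_eq (by simp [w])) (hw₁ 0))
    (fun m => exists_int_eq_two_pow_mul_aeval_half_pow (sternB t k) (T ^ m))
    (fun m => by
      rw [hH.functional_eq (by omega) (by rw [abs_of_nonneg (hw m).1]; exact hw₁ m), hpow₁,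
        hpow₂, show w m ^ (T * S) = (1 / 2) ^ (T * S * T ^ m) by simp [w, ← pow_mul, mul_comm]])
  simpa [w] using key
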